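/- The proper subclosure relation is well-founded: there is no infinite descending chain of direct subclosure steps ⦃L₁,T₁⦄ → ⦃L₂,T₂⦄ → ⋯. Equivalently, the transitive closure of the direct subclosure relation on closures (environment, term) is well-founded. -/

import Mathlib

inductive Bk | abbr | abst
deriving DecidableEq

inductive Fk | appl | cast
deriving DecidableEq

inductive Tm
| sort : Nat → Tm
| lref : Nat → Tm
| bind : Bk → Tm → Tm → Tm
| flat : Fk → Tm → Tm → Tm
deriving DecidableEq

inductive Lift : Nat → Nat → Tm → Tm → Prop
| sort (l m k) : Lift l m (.sort k) (.sort k)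
| lt {l m i} : i < l → Lift l m (.lref i) (.lref i)
| ge {l m i} : l ≤ i → Lift l m (.lref i) (.lref (i + m))
| bind {l m b W₁ W₂ T₁ T₂} : Lift l m W₁ W₂ → Lift (l + 1) m T₁ T₂ →
    Lift l m (.bind b W₁ T₁) (.bind b W₂ T₂)
| flat {l m f V₁ V₂ T₁ T₂} : Lift l m V₁ V₂ → Lift l m T₁ T₂ →
    Lift l m (.flat f V₁ T₁) (.flat f V₂ T₂)

inductive Env
| null : Env
| pair : Env → Bk → Tm → Env
deriving DecidableEq

inductive Drop : Nat → Nat → Env → Env → Prop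
| atom (l) : Drop l 0 .null .null
| pair {L₁ L₂ b W} : Drop 0 0 L₁ L₂ → Drop 0 0 (.pair L₁ b W) (.pair L₂ b W)
| drop {m L₁ L₂ b W} : Drop 0 m L₁ L₂ → Drop 0 (m + 1) (.pair L₁ b W) L₂
| skip {l m L₁ L₂ b W₁ W₂} : Drop l m L₁ L₂ → Lift l m W₂ W₁ →
    Drop (l + 1) m (.pair L₁ b W₁) (.pair L₂ b W₂)

inductive Fqu : Env → Tm → Env → Tm → Prop
| bindL {L b V T} : Fqu L (.bind b V T) L V
| flatL {L f V T} : Fqu L (.flat f V T) L V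
| flatR {L f V T} : Fqu L (.flat f V T) L T
| bindR {L b W T} : Fqu L (.bind b W T) (.pair L b W) T
| lref {K b W} : Fqu (.pair K b W) (.lref 0) K W
| drop {L K T U m} : Drop 0 (m + 1) L K → Lift 0 (m + 1) T U → Fqu L U K T

/-!
Every direct subclosure step strictly decreases the total size of a closure, i.e. the size of
its term plus the sizes of all terms in its environment. Relocation preserves the size of a
term, so dropping entries can only shrink an environment, and strictly so when at least one
entry is removed.
-/

def Tm.size : Tm → ℕ
  | .sort _ => 1
  | .lref _ => 1
  | .bind _ W T => W.size + T.size + 2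
  | .flat _ V T => V.size + T.size + 2

def Env.size : Env → ℕ
  | .null => 0
  | .pair L _ W => L.size + W.size + 1

def closureSize (p : Env × Tm) : ℕ := p.1.size + p.2.size

theorem Lift.size_eq {l m : ℕ} {T U : Tm} (h : Lift l m T U) : T.size = U.size := by
  induction h <;> simp [Tm.size, *]

theorem Drop.size_le {l m : ℕ} {L K : Env} (h : Drop l m L K) : K.size ≤ L.size := by
  induction h with
  | atom => rfl
  | pair _ ih => simp only [Env.size]; omega
  | drop _ ih => simp only [Env.size]; omega
  | skip _ hW ih => simp only [Env.size, hW.size_eq]; omega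

theorem Drop.size_lt {l m : ℕ} {L K : Env} (h : Drop l m L K) (hm : 0 < m) :
    K.size < L.size := by
  induction h with
  | atom => omega
  | pair => omega
  | drop hd => simp only [Env.size]; have := hd.size_le; omega
  | skip _ hW ih => simp only [Env.size, hW.size_eq]; have := ih hm; omega

theorem Fqu.closureSize_lt {L K : Env} {T U : Tm} (h : Fqu L T K U) :
    closureSize (K, U) < closureSize (L, T) := by
  cases h with
  | drop hd hl =>
    have := hd.size_lt (Nat.succ_pos _)
    have := hl.size_eq
    simp only [closureSize]; omega
  | _ => simp only [closureSize, Tm.size, Env.size]; omega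

theorem fqu_wf :
    WellFounded (Relation.TransGen
      (fun p q : Env × Tm => Fqu q.1 q.2 p.1 p.2)) :=
  (Subrelation.wf Fqu.closureSize_lt (InvImage.wf closureSize wellFounded_lt)).transGen
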